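/- arXiv:1906.02226 — 2 statements merged into one kernel-verified Lean document; each statement's English description precedes it below -/
import Mathlib

section
/- Suppose for each $j \in \{1, \dots, d\}$ we have a function $f_j : \mathbb{R}^d \to \mathbb{R}^m$, and define the weighted adjacency matrix $A \in \mathbb{R}^{d \times d}_{\geq 0}$ with $A_{ij} \geq 0$, $A_{jj} = 0$, such that whenever $A_{ij} = 0$ the function $f_j$ does not depend on coordinate $i$. If $\mathrm{Tr}\, e^{A} = d$, then the directed graph $G$ on $\{1,\dots,d\}$ with edge set $\{(i,j) : A_{ij} > 0\}$ is acyclic, and consequently each $f_j$ depends only on coordinates in the parent set $\pi_j = \{i : A_{ij} > 0\}$, which defines a DAG structure. -/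
open Finset Matrix NormedSpace
open scoped Nat

/-!
Since `A ≥ 0`, every term `trace (A ^ k) / k!` of the series for `trace (exp A)` is nonnegative,
and the `k = 0` term alone equals `d`. So `trace (exp A) = d` forces `trace (A ^ k) = 0` for
`k ≥ 1`. A closed walk of length `k` along positive entries contributes a positive diagonal
entry to `A ^ k`, hence there is none. The parent-set statement follows by changing the
coordinates outside the parent set one at a time.
-/

/-- A directed graph on `Fin d`, given by an edge relation, is acyclic if it contains no
nonempty closed directed walk. -/
def DiGraphAcyclic {d : ℕ} (E : Fin d → Fin d → Prop) : Prop :=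
  ¬ ∃ (k : ℕ) (v : ℕ → Fin d), 1 ≤ k ∧ v k = v 0 ∧ ∀ i < k, E (v i) (v (i + 1))

theorem DependsOn.inter {ι β : Type*} {α : ι → Type*} {f : (Π i, α i) → β} {s t : Set ι}
    (hs : DependsOn f s) (ht : DependsOn f t) : DependsOn f (s ∩ t) := by
  classical
  intro x y hxy
  have hx : ∀ i ∈ s, x i = s.piecewise x y i := fun i hi => (s.piecewise_eq_of_mem x y hi).symm
  have hy : ∀ i ∈ t, s.piecewise x y i = y i := by
    intro i hi
    by_cases his : i ∈ s
    · rw [s.piecewise_eq_of_mem x y his, hxy i ⟨his, hi⟩]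
    · exact s.piecewise_eq_of_notMem x y his
  exact (hs hx).trans (ht hy)

theorem dependsOn_of_forall_notMem {ι β : Type*} [Finite ι] {α : ι → Type*}
    {f : (Π i, α i) → β} {s : Set ι} (h : ∀ i ∉ s, DependsOn f {i}ᶜ) : DependsOn f s := by
  classical
  have hcompl : ∀ t : Finset ι, (∀ i ∈ t, DependsOn f {i}ᶜ) → DependsOn f (↑t)ᶜ := by
    intro t
    induction t using Finset.induction_on with
    | empty => simpa using dependsOn_univ f
    | insert a t _ ih =>
      intro ht
      rw [coe_insert, Set.insert_eq, Set.compl_union]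
      exact (ht a (mem_insert_self a t)).inter (ih fun i hi => ht i (mem_insert_of_mem hi))
  simpa using hcompl (Set.toFinite sᶜ).toFinset (by simpa using h)

namespace Matrix

theorem pow_apply_pos_of_walk {n R : Type*} [Fintype n] [DecidableEq n] [Semiring R]
    [PartialOrder R] [IsStrictOrderedRing R] {A : Matrix n n R} (hA : ∀ i j, 0 ≤ A i j)
    (v : ℕ → n) (k : ℕ) (hv : ∀ i < k, 0 < A (v i) (v (i + 1))) : 0 < (A ^ k) (v 0) (v k) := by
  induction k with
  | zero => simp
  | succ k ih =>
    rw [pow_succ, mul_apply]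
    exact sum_pos' (fun l _ => mul_nonneg (pow_apply_nonneg hA k _ _) (hA _ _))
      ⟨v k, mem_univ _, mul_pos (ih fun i hi => hv i (by omega)) (hv k k.lt_succ_self)⟩

theorem hasSum_trace_exp {n : Type*} [Fintype n] [DecidableEq n] (A : Matrix n n ℝ) :
    HasSum (fun k => (k !⁻¹ : ℝ) * trace (A ^ k)) (trace (exp A)) := by
  let _ : NormedRing (Matrix n n ℝ) := Matrix.linftyOpNormedRing
  let _ : NormedAlgebra ℝ (Matrix n n ℝ) := Matrix.linftyOpNormedAlgebra
  have h := (exp_series_hasSum_exp' (𝕂 := ℝ) A).map (traceAddMonoidHom n ℝ)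
    continuous_id.matrix_trace
  simp only [Function.comp_def, traceAddMonoidHom_apply, trace_smul, smul_eq_mul] at h
  exact h

theorem card_lt_trace_exp {n : Type*} [Fintype n] [DecidableEq n] {A : Matrix n n ℝ}
    (hA : ∀ i j, 0 ≤ A i j) {k : ℕ} (hk : k ≠ 0) (hpos : 0 < trace (A ^ k)) :
    (Fintype.card n : ℝ) < trace (exp A) := by
  have hterm_nonneg : ∀ j, 0 ≤ (j !⁻¹ : ℝ) * trace (A ^ j) := fun j =>
    mul_nonneg (by positivity) (sum_nonneg fun i _ => pow_apply_nonneg hA j i i)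
  simpa using lt_hasSum (hasSum_trace_exp A) 0 (fun j _ => hterm_nonneg j) k hk
    (mul_pos (by positivity) hpos)

end Matrix

theorem diGraphAcyclic_of_trace_exp_eq {d : ℕ} {A : Matrix (Fin d) (Fin d) ℝ}
    (hA : ∀ i j, 0 ≤ A i j) (htr : trace (exp A) = d) : DiGraphAcyclic (fun i j => 0 < A i j) := by
  rintro ⟨k, v, hk, hclosed, hwalk⟩
  have hdiag : 0 < (A ^ k) (v 0) (v 0) := hclosed ▸ pow_apply_pos_of_walk hA v k hwalk
  have htrace : 0 < trace (A ^ k) :=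
    hdiag.trans_le (single_le_sum (fun i _ => pow_apply_nonneg hA k i i) (mem_univ _))
  simpa [htr] using card_lt_trace_exp hA (by omega) htrace

theorem dag_structure_of_trace_exp_eq_dim_general {d m : ℕ}
    (f : Fin d → (Fin d → ℝ) → (Fin m → ℝ))
    (A : Matrix (Fin d) (Fin d) ℝ)
    (hA : ∀ i j, 0 ≤ A i j)
    (hdep : ∀ i j, A i j = 0 →
      ∀ x x' : Fin d → ℝ, (∀ l, l ≠ i → x l = x' l) → f j x = f j x')
    (htr : Matrix.trace (NormedSpace.exp A) = d) :
    DiGraphAcyclic (fun i j => 0 < A i j) ∧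
      ∀ j, ∀ x x' : Fin d → ℝ, (∀ i, 0 < A i j → x i = x' i) → f j x = f j x' :=
  ⟨diGraphAcyclic_of_trace_exp_eq hA htr, fun j =>
    dependsOn_of_forall_notMem (s := {i | 0 < A i j}) fun i hi =>
      hdep i j ((hA i j).eq_of_not_lt hi).symm⟩

/-- If each `f j` does not depend on coordinate `i` whenever `A i j = 0` (with `A` a
nonnegative weighted adjacency matrix with zero diagonal), and `Tr e^A = d`, then the graph
with edges `{(i,j) : A i j > 0}` is acyclic and each `f j` depends only on the coordinates in
its parent set `{i : A i j > 0}`. -/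
theorem dag_structure_of_trace_exp_eq_dim {d m : ℕ}
    (f : Fin d → (Fin d → ℝ) → (Fin m → ℝ))
    (A : Matrix (Fin d) (Fin d) ℝ)
    (hA : ∀ i j, 0 ≤ A i j) (hdiag : ∀ j, A j j = 0)
    (hdep : ∀ i j, A i j = 0 →
      ∀ x x' : Fin d → ℝ, (∀ l, l ≠ i → x l = x' l) → f j x = f j x')
    (htr : Matrix.trace (NormedSpace.exp A) = d) :
    DiGraphAcyclic (fun i j => 0 < A i j) ∧
      ∀ j, ∀ x x' : Fin d → ℝ, (∀ i, 0 < A i j → x i = x' i) → f j x = f j x' :=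
  dag_structure_of_trace_exp_eq_dim_general f A hA hdep htr
end

section
/- Let $A \in \mathbb{R}^{d \times d}$ be a nonnegative matrix and define $h(A) = \mathrm{Tr}\, e^A - d$. Then $h(A) \geq 0$, and $h(A) = 0$ if and only if the directed graph with edge set $\{(i,j) : A_{ij} > 0\}$ is acyclic. Moreover, if the graph has a directed cycle of length $k$, then $h(A) \geq \frac{1}{k!}\prod_{\text{edges }(i,j)\text{ on the cycle}} A_{ij} > 0$. -/
namespace Matrix

open NormedSpace Finset
open scoped Nat

section Walks

variable {R ι : Type*} [Fintype ι] [DecidableEq ι]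

theorem exists_walk_of_pow_apply_ne_zero [Semiring R] (A : Matrix ι ι R) (n : ℕ) (i j : ι)
    (h : (A ^ n) i j ≠ 0) :
    ∃ v : ℕ → ι, v 0 = i ∧ v n = j ∧ ∀ t < n, A (v t) (v (t + 1)) ≠ 0 := by
  induction n generalizing j with
  | zero =>
    obtain rfl : i = j := by_contra fun hij => h (by simp [one_apply_ne hij])
    exact ⟨fun _ => i, rfl, rfl, by simp⟩
  | succ n ih =>
    rw [pow_succ, mul_apply] at h
    obtain ⟨m, -, hm⟩ := exists_ne_zero_of_sum_ne_zero h
    obtain ⟨v, hv0, hvn, hv⟩ := ih m (left_ne_zero_of_mul hm)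
    refine ⟨Function.update v (n + 1) j, by simp [hv0], by simp, fun t ht => ?_⟩
    rcases (Nat.lt_succ_iff.mp ht).lt_or_eq with ht | rfl
    · rw [Function.update_of_ne (by omega), Function.update_of_ne (by omega)]
      exact hv t ht
    · simpa [hvn] using right_ne_zero_of_mul hm

theorem trace_pow_succ_eq_zero_of_acyclic [Semiring R] {d : ℕ} (A : Matrix (Fin d) (Fin d) R)
    (hA : DiGraphAcyclic fun i j => A i j ≠ 0) (n : ℕ) : trace (A ^ (n + 1)) = 0 :=
  sum_eq_zero fun i _ => by_contra fun h => by
    obtain ⟨v, hv0, hvn, hv⟩ := exists_walk_of_pow_apply_ne_zero A (n + 1) i i h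
    exact hA ⟨n + 1, v, n.succ_pos, hvn.trans hv0.symm, hv⟩

variable [CommSemiring R] [PartialOrder R] [IsOrderedRing R] {A : Matrix ι ι R}

theorem prod_le_pow_apply (hA : ∀ i j, 0 ≤ A i j) (k : ℕ) (v : ℕ → ι) :
    ∏ t ∈ range k, A (v t) (v (t + 1)) ≤ (A ^ k) (v 0) (v k) := by
  induction k with
  | zero => simp
  | succ k ih =>
    rw [prod_range_succ, pow_succ, mul_apply]
    calc (∏ t ∈ range k, A (v t) (v (t + 1))) * A (v k) (v (k + 1))
        ≤ (A ^ k) (v 0) (v k) * A (v k) (v (k + 1)) := mul_le_mul_of_nonneg_right ih (hA _ _)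
      _ ≤ ∑ m, (A ^ k) (v 0) m * A m (v (k + 1)) :=
          single_le_sum (f := fun m => (A ^ k) (v 0) m * A m (v (k + 1)))
            (fun m _ => mul_nonneg (pow_apply_nonneg hA k _ _) (hA _ _)) (mem_univ _)

theorem trace_pow_nonneg (hA : ∀ i j, 0 ≤ A i j) (k : ℕ) : 0 ≤ trace (A ^ k) :=
  sum_nonneg fun i _ => pow_apply_nonneg hA k i i

theorem prod_le_trace_pow_of_closed (hA : ∀ i j, 0 ≤ A i j) {k : ℕ} {v : ℕ → ι}
    (hv : v k = v 0) : ∏ t ∈ range k, A (v t) (v (t + 1)) ≤ trace (A ^ k) :=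
  calc ∏ t ∈ range k, A (v t) (v (t + 1)) ≤ (A ^ k) (v 0) (v 0) := hv ▸ prod_le_pow_apply hA k v
    _ ≤ trace (A ^ k) :=
      single_le_sum (f := fun i => (A ^ k) i i) (fun i _ => pow_apply_nonneg hA k i i) (mem_univ _)

end Walks

section Exp

variable {𝕂 ι : Type*} [RCLike 𝕂] [Fintype ι] [DecidableEq ι]

open scoped Norms.Operator in
theorem hasSum_trace_exp_s15 (A : Matrix ι ι 𝕂) :
    HasSum (fun n => trace (A ^ n) / (n ! : 𝕂)) (trace (exp A)) := by
  have h := (exp_series_hasSum_exp' (𝕂 := 𝕂) A).map (traceAddMonoidHom ι 𝕂)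
    (continuous_id.matrix_trace)
  simp only [Function.comp_def, traceAddMonoidHom_apply, trace_smul, smul_eq_mul] at h
  simp only [div_eq_inv_mul]
  exact h

theorem hasSum_trace_exp_sub_card (A : Matrix ι ι 𝕂) :
    HasSum (fun n => trace (A ^ (n + 1)) / ((n + 1)! : 𝕂)) (trace (exp A) - Fintype.card ι) := by
  simpa using (hasSum_nat_add_iff' 1).mpr (hasSum_trace_exp_s15 A)

end Exp

end Matrix

/-- For a nonnegative matrix `A`, `h(A) = Tr e^A - d` is nonnegative, vanishes iff the graph
of positive entries is acyclic, and is bounded below by `(1/k!) ∏ A_{ij}` along any directed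
cycle of length `k` (which is a positive quantity). -/
theorem acyclicity_penalty_properties {d : ℕ} (A : Matrix (Fin d) (Fin d) ℝ)
    (hA : ∀ i j, 0 ≤ A i j) :
    0 ≤ Matrix.trace (NormedSpace.exp A) - d ∧
    (Matrix.trace (NormedSpace.exp A) - d = 0 ↔ DiGraphAcyclic (fun i j => 0 < A i j)) ∧
    ∀ (k : ℕ) (v : ℕ → Fin d), 1 ≤ k → v k = v 0 →
      (∀ i < k, 0 < A (v i) (v (i + 1))) →
      (0 < (∏ i ∈ Finset.range k, A (v i) (v (i + 1))) / (k.factorial : ℝ) ∧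
        (∏ i ∈ Finset.range k, A (v i) (v (i + 1))) / (k.factorial : ℝ) ≤
          Matrix.trace (NormedSpace.exp A) - d) := by
  have hsum := Matrix.hasSum_trace_exp_sub_card A
  rw [Fintype.card_fin] at hsum
  have hterm (n : ℕ) : 0 ≤ Matrix.trace (A ^ (n + 1)) / ((n + 1).factorial : ℝ) :=
    div_nonneg (Matrix.trace_pow_nonneg hA _) (by positivity)
  have hcycle {k : ℕ} {v : ℕ → Fin d} (hk : 1 ≤ k) (hvk : v k = v 0) :
      (∏ i ∈ Finset.range k, A (v i) (v (i + 1))) / (k.factorial : ℝ) ≤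
        Matrix.trace (NormedSpace.exp A) - d := by
    obtain ⟨n, rfl⟩ := Nat.exists_eq_add_of_le' hk
    calc _ ≤ Matrix.trace (A ^ (n + 1)) / ((n + 1).factorial : ℝ) :=
          div_le_div_of_nonneg_right (Matrix.prod_le_trace_pow_of_closed hA hvk) (by positivity)
      _ ≤ _ := le_hasSum hsum n fun m _ => hterm m
  have hpos {k : ℕ} {v : ℕ → Fin d} (hv : ∀ i < k, 0 < A (v i) (v (i + 1))) :
      0 < (∏ i ∈ Finset.range k, A (v i) (v (i + 1))) / (k.factorial : ℝ) :=
    div_pos (Finset.prod_pos fun i hi => hv i (Finset.mem_range.mp hi)) (by positivity)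
  have hsupport : (fun i j => 0 < A i j) = fun i j => A i j ≠ 0 :=
    funext₂ fun i j => propext (hA i j).lt_iff_ne'
  refine ⟨hsum.nonneg hterm, ⟨fun h0 ⟨k, v, hk, hvk, hv⟩ => ?_, fun hac => ?_⟩,
    fun k v hk hvk hv => ⟨hpos hv, hcycle hk hvk⟩⟩
  · exact (hpos hv).not_ge (h0 ▸ hcycle hk hvk)
  · rw [hsupport] at hac
    exact hsum.unique (by simp [Matrix.trace_pow_succ_eq_zero_of_acyclic A hac])
end
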